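/- arXiv:2405.06187 — 5 statements merged into one kernel-verified Lean document; each statement's English description precedes it below -/
import Mathlib

section
/- For any integer m ≥ 1, the multiset dimension of the path graph P_m equals 1 if and only if m ≥ 2 (and equals 0 for m = 1); moreover any connected graph with multiset dimension at most 1 is a path. -/
/-!
A single vertex `x` resolves a graph exactly when `v ↦ d(x, v)` is injective. In a connected graph
every vertex other than `x` has a neighbour one step closer to `x`, so injectivity forces the
distance levels to be the singletons at distances `0, …, |V| - 1`, consecutive ones adjacent and no
other edges: the graph is a path. Conversely an end vertex resolves a path, while the empty set
resolves only graphs with at most one vertex.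
-/

/-- B is an m-resolving set: distinct vertices get distinct multisets of distances to B. -/
def mResolving {V : Type*} (G : SimpleGraph V) (B : Finset V) : Prop :=
  ∀ u v : V, u ≠ v →
    Multiset.map (fun b => G.dist u b) B.val ≠ Multiset.map (fun b => G.dist v b) B.val

/-- The multiset dimension: least cardinality of an m-resolving set, or ∞ if none exists. -/
noncomputable def Mdim {V : Type*} (G : SimpleGraph V) : ℕ∞ :=
  sInf {n : ℕ∞ | ∃ B : Finset V, mResolving G B ∧ (B.card : ℕ∞) = n}

open SimpleGraph Function

namespace SimpleGraph

variable {V : Type*} {G : SimpleGraph V}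

lemma Reachable.exists_adj_dist_add_one_eq {x v : V} (h : G.Reachable x v) (hne : x ≠ v) :
    ∃ w, G.Adj w v ∧ G.dist x w + 1 = G.dist x v := by
  obtain ⟨p, hp⟩ := h.exists_walk_length_eq_dist
  have hp_not_nil : ¬p.Nil := by
    rw [← Walk.length_eq_zero_iff, hp]
    exact (h.pos_dist_of_ne hne).ne'
  refine ⟨p.penultimate, p.adj_penultimate hp_not_nil, le_antisymm ?_ ?_⟩
  · rw [← hp, ← Walk.length_dropLast_add_one hp_not_nil]
    exact Nat.add_le_add_right (dist_le _) 1
  · have hadj := p.adj_penultimate hp_not_nil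
    simpa [dist_eq_one_iff_adj.mpr hadj] using hadj.reachable.dist_triangle_right x

lemma adj_iff_of_injective_dist (hconn : G.Connected) {x : V} (hinj : Injective (G.dist x))
    {u v : V} : G.Adj u v ↔ G.dist x u + 1 = G.dist x v ∨ G.dist x v + 1 = G.dist x u := by
  have adj_of_succ {u v : V} (h : G.dist x u + 1 = G.dist x v) : G.Adj u v := by
    have hxv : x ≠ v := by rintro rfl; simp at h
    obtain ⟨w, hwv, hw⟩ := (hconn x v).exists_adj_dist_add_one_eq hxv
    rwa [← hinj (Nat.succ_injective (hw.trans h.symm))]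
  refine ⟨fun h => ?_, fun h => h.elim adj_of_succ fun h => (adj_of_succ h).symm⟩
  have := h.diff_dist_adj (u := x)
  have := hinj.ne h.ne
  omega

lemma Connected.nonempty_iso_pathGraph_of_injective_dist [Fintype V] (hconn : G.Connected)
    {x : V} (hinj : Injective (G.dist x)) : Nonempty (G ≃g pathGraph (Fintype.card V)) := by
  have hlt (v : V) : G.dist x v < Fintype.card V := by
    obtain ⟨p, hp, hlen⟩ := hconn.exists_path_of_dist x v
    exact hlen ▸ hp.length_lt
  let f (v : V) : Fin (Fintype.card V) := ⟨G.dist x v, hlt v⟩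
  have hf : Bijective f := (Fintype.bijective_iff_injective_and_card f).mpr
    ⟨fun u v h => hinj (Fin.mk.inj h), by simp⟩
  exact ⟨⟨Equiv.ofBijective f hf, by simp [f, pathGraph_adj, adj_iff_of_injective_dist hconn hinj]⟩⟩

lemma pathGraph_val_le_val_add_length {n : ℕ} {u v : Fin n} (p : (pathGraph n).Walk u v) :
    (v : ℕ) ≤ u + p.length := by
  induction p with
  | nil => simp
  | cons h _ ih =>
    rw [pathGraph_adj] at h
    simp only [Walk.length_cons]
    omega

lemma pathGraph_dist_zero {n : ℕ} (u : Fin (n + 1)) : (pathGraph (n + 1)).dist 0 u = u := by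
  refine le_antisymm ?_ ?_
  · induction u using Fin.induction with
    | zero => simp
    | succ i ih =>
      have hadj : (pathGraph (n + 1)).Adj i.castSucc i.succ := by simp [pathGraph_adj]
      have := hadj.reachable.dist_triangle_right 0
      rw [dist_eq_one_iff_adj.mpr hadj] at this
      simp only [Fin.val_succ, Fin.val_castSucc] at ih ⊢
      omega
  · obtain ⟨p, hp⟩ := (pathGraph_connected n).exists_walk_length_eq_dist 0 u
    simpa [hp] using pathGraph_val_le_val_add_length p

end SimpleGraph

section MultisetDimension

variable {V : Type*} {G : SimpleGraph V}

lemma mResolving_empty_iff : mResolving G ∅ ↔ Subsingleton V := by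
  simp [mResolving, subsingleton_iff]

lemma mResolving_singleton_iff {x : V} : mResolving G {x} ↔ Injective (G.dist x) := by
  simp [mResolving, Injective, dist_comm (v := x), not_imp_not]

lemma mdim_le_natCast_iff {k : ℕ} : Mdim G ≤ k ↔ ∃ B : Finset V, mResolving G B ∧ B.card ≤ k := by
  refine ⟨fun h => ?_, fun ⟨B, hB, hcard⟩ =>
    (show Mdim G ≤ B.card from sInf_le ⟨B, hB, rfl⟩).trans (by exact_mod_cast hcard)⟩
  by_contra! hlarge
  have : ((k + 1 : ℕ) : ℕ∞) ≤ Mdim G := le_sInf <| by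
    rintro _ ⟨B, hB, rfl⟩
    exact_mod_cast hlarge B hB
  exact absurd (this.trans h) (by exact_mod_cast k.lt_succ_self.not_ge)

lemma mdim_eq_zero_iff : Mdim G = 0 ↔ Subsingleton V := by
  rw [← nonpos_iff_eq_zero, ← Nat.cast_zero, mdim_le_natCast_iff, ← mResolving_empty_iff (G := G)]
  simp

lemma mdim_le_one_iff [Nonempty V] : Mdim G ≤ 1 ↔ ∃ x, Injective (G.dist x) := by
  rw [← Nat.cast_one, mdim_le_natCast_iff]
  constructor
  · rintro ⟨B, hB, hcard⟩
    obtain ⟨x, hBx⟩ := Finset.card_le_one_iff_subset_singleton.mp hcard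
    rcases Finset.subset_singleton_iff.mp hBx with rfl | rfl
    · have := mResolving_empty_iff.mp hB
      exact ⟨x, injective_of_subsingleton _⟩
    · exact ⟨x, mResolving_singleton_iff.mp hB⟩
  · rintro ⟨x, hx⟩
    exact ⟨{x}, mResolving_singleton_iff.mpr hx, by simp⟩

end MultisetDimension

lemma mdim_pathGraph_add_two (n : ℕ) : Mdim (pathGraph (n + 2)) = 1 := by
  refine le_antisymm (mdim_le_one_iff.mpr ⟨0, fun u v h => ?_⟩) ?_
  · simpa [pathGraph_dist_zero, Fin.ext_iff] using h
  · rw [Order.one_le_iff_ne_zero, Ne, mdim_eq_zero_iff, not_subsingleton_iff_nontrivial]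
    infer_instance

theorem mdim_path :
    (∀ m : ℕ, 1 ≤ m → (Mdim (SimpleGraph.pathGraph m) = 1 ↔ 2 ≤ m)) ∧
    Mdim (SimpleGraph.pathGraph 1) = 0 ∧
    (∀ (V : Type) [Fintype V] (G : SimpleGraph V), G.Connected → Mdim G ≤ 1 →
      ∃ n : ℕ, Nonempty (G ≃g SimpleGraph.pathGraph n)) := by
  have mdim_pathGraph_one : Mdim (pathGraph 1) = 0 := mdim_eq_zero_iff.mpr inferInstance
  refine ⟨fun m hm => ?_, mdim_pathGraph_one, fun V _ G hconn hG => ?_⟩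
  · rcases hm.eq_or_lt with rfl | hm
    · simp [mdim_pathGraph_one]
    · obtain ⟨n, rfl⟩ := Nat.exists_eq_add_of_le' hm
      simp [mdim_pathGraph_add_two]
  · have := hconn.nonempty
    obtain ⟨x, hx⟩ := mdim_le_one_iff.mp hG
    exact ⟨_, hconn.nonempty_iso_pathGraph_of_injective_dist hx⟩
end

section
/- For any integer n ≥ 6, the cycle graph C_n has multiset dimension exactly 3. -/
/-!
A set of at most two vertices never m-resolves a graph in which every vertex has two distinct
neighbours: from `∅` all vertices look alike, from `{b}` two neighbours of `b` both see `{1}`, and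
from `{a, b}` both `a` and `b` see `{0, d(a, b)}`.

Conversely `{0, 1, 3}` m-resolves `C_n` for `n ≥ 6`. The distance on `C_n` is
`min |x - y| (n - |x - y|)`: walks along the cycle give the upper bound, and the lower bound holds
because this function changes by at most one along an edge. Equal multisets of distances to
`{0, 1, 3}` then match the two distance triples by one of six permutations, and each case is
linear arithmetic.
-/

open SimpleGraph

theorem List.perm_triple {α : Type*} {a b c : α} {l : List α} :
    l.Perm [a, b, c] ↔ l = [a, b, c] ∨ l = [a, c, b] ∨ l = [b, a, c] ∨
      l = [b, c, a] ∨ l = [c, a, b] ∨ l = [c, b, a] := by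
  have : [a, b, c].permutations =
      [[a, b, c], [b, a, c], [c, b, a], [b, c, a], [c, a, b], [a, c, b]] := by cbv
  grind [=_ List.mem_permutations]

section General

variable {V : Type*} (G : SimpleGraph V)

theorem Mdim_le_card {B : Finset V} (hB : mResolving G B) : Mdim G ≤ B.card :=
  sInf_le ⟨B, hB, rfl⟩

theorem le_Mdim {k : ℕ∞} (h : ∀ B, mResolving G B → k ≤ B.card) : k ≤ Mdim G :=
  le_sInf <| by
    rintro _ ⟨B, hB, rfl⟩
    exact h B hB

theorem not_mResolving_empty {u v : V} (huv : u ≠ v) : ¬mResolving G ∅ :=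
  fun h => h u v huv rfl

theorem not_mResolving_singleton {b : V} (hb : (G.neighborSet b).Nontrivial) :
    ¬mResolving G {b} := by
  obtain ⟨x, hx, y, hy, hxy⟩ := hb
  intro h
  apply h x y hxy
  simp [dist_comm, dist_eq_one_iff_adj.2 hx, dist_eq_one_iff_adj.2 hy]

theorem not_mResolving_pair [DecidableEq V] {a b : V} (hab : a ≠ b) : ¬mResolving G {a, b} := by
  intro h
  apply h a b hab
  rw [Finset.insert_val_of_notMem (by simpa using hab), Finset.singleton_val]
  simp only [Multiset.map_cons, Multiset.map_singleton, dist_self, dist_comm (u := b)]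
  exact Multiset.cons_swap _ _ _

theorem three_le_card_of_mResolving [Nonempty V] [DecidableEq V]
    (hG : ∀ v, (G.neighborSet v).Nontrivial) {B : Finset V} (hB : mResolving G B) : 3 ≤ B.card := by
  by_contra! hcard
  interval_cases h : B.card
  · obtain ⟨x, -, y, -, hxy⟩ := hG (Classical.arbitrary V)
    exact not_mResolving_empty G hxy (Finset.card_eq_zero.1 h ▸ hB)
  · obtain ⟨b, rfl⟩ := Finset.card_eq_one.1 h
    exact not_mResolving_singleton G (hG b) hB
  · obtain ⟨a, b, hab, rfl⟩ := Finset.card_eq_two.1 h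
    exact not_mResolving_pair G hab hB

end General

namespace SimpleGraph

variable {V : Type*} {G : SimpleGraph V}

theorem Walk.apply_le_apply_add_length {f : V → ℕ} (hf : ∀ a b, G.Adj a b → f b ≤ f a + 1)
    {u v : V} (p : G.Walk u v) : f v ≤ f u + p.length := by
  induction p with
  | nil => simp
  | cons hadj _ ih =>
    have := hf _ _ hadj
    rw [Walk.length_cons]
    omega

theorem Reachable.apply_le_apply_add_dist {f : V → ℕ} (hf : ∀ a b, G.Adj a b → f b ≤ f a + 1)
    {u v : V} (h : G.Reachable u v) : f v ≤ f u + G.dist u v := by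
  obtain ⟨p, hp⟩ := h.exists_walk_length_eq_dist
  exact hp ▸ p.apply_le_apply_add_length hf

end SimpleGraph

def cycleDist (N x y : ℕ) : ℕ := min (x.dist y) (N - x.dist y)

theorem eq_of_perm_cycleDist {N x y : ℕ} (hN : 6 ≤ N) (hx : x < N) (hy : y < N)
    (h : [cycleDist N x 0, cycleDist N x 1, cycleDist N x 3].Perm
      [cycleDist N y 0, cycleDist N y 1, cycleDist N y 3]) : x = y := by
  wlog hxy : x < y generalizing x y
  · rcases Nat.lt_or_ge y x with hyx | hyx
    · exact (this hy hx h.symm hyx).symm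
    · omega
  -- Each cycle distance is `|z - c|` or `N - |z - c|` and at most `N / 2`; given this, each of
  -- the six ways of matching the two triples is a linear arithmetic problem.
  have hd : ∀ z < N, ∀ c < N, (cycleDist N z c = z.dist c ∨ cycleDist N z c + z.dist c = N) ∧
      2 * cycleDist N z c ≤ N := by
    intro z hz c hc
    unfold cycleDist Nat.dist
    omega
  have := hd x hx 0 (by omega); have := hd x hx 1 (by omega); have := hd x hx 3 (by omega)
  have := hd y hy 0 (by omega); have := hd y hy 1 (by omega); have := hd y hy 3 (by omega)
  generalize cycleDist N x 0 = a₀, cycleDist N x 1 = a₁, cycleDist N x 3 = a₃,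
    cycleDist N y 0 = b₀, cycleDist N y 1 = b₁, cycleDist N y 3 = b₃ at *
  unfold Nat.dist at *
  rcases List.perm_triple.1 h with h | h | h | h | h | h <;>
    simp only [List.cons.injEq, and_true] at h <;> omega

section Cycle

variable {n : ℕ}

theorem cycleGraph_dist_le_val_sub (u v : Fin (n + 2)) :
    (cycleGraph (n + 2)).dist u v ≤ (v - u).val := by
  induction h : (v - u).val generalizing v with
  | zero =>
    obtain rfl : v = u := by zify at h; fin_omega
    simp
  | succ k ih =>
    have hadj : (cycleGraph (n + 2)).Adj (v - 1) v := cycleGraph_adj.2 (.inr (sub_sub_cancel v 1))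
    have hk := ih (v - 1) (by zify at *; fin_omega)
    calc (cycleGraph (n + 2)).dist u v
        ≤ (cycleGraph (n + 2)).dist u (v - 1) + (cycleGraph (n + 2)).dist (v - 1) v :=
          cycleGraph_connected.dist_triangle
      _ ≤ k + 1 := by rw [dist_eq_one_iff_adj.2 hadj]; omega

theorem cycleGraph_dist (u v : Fin (n + 2)) :
    (cycleGraph (n + 2)).dist u v = cycleDist (n + 2) u v := by
  apply le_antisymm
  · have h₁ := cycleGraph_dist_le_val_sub u v
    have h₂ := dist_comm (G := cycleGraph (n + 2)) ▸ cycleGraph_dist_le_val_sub v u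
    unfold cycleDist Nat.dist
    zify at *
    fin_omega
  · have hf : ∀ a b, (cycleGraph (n + 2)).Adj a b →
        cycleDist (n + 2) u b ≤ cycleDist (n + 2) u a + 1 := by
      intro a b h
      rw [cycleGraph_adj', ← Fin.val_one n] at h
      unfold cycleDist Nat.dist
      zify at h
      fin_omega
    simpa [cycleDist] using Reachable.apply_le_apply_add_dist hf (cycleGraph_preconnected u v)

theorem cycleGraph_neighborSet_nontrivial (v : Fin (n + 3)) :
    ((cycleGraph (n + 3)).neighborSet v).Nontrivial := by
  rw [← coe_neighborFinset, Finset.nontrivial_coe, ← Finset.one_lt_card_iff_nontrivial,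
    card_neighborFinset_eq_degree, cycleGraph_degree_three_le]
  norm_num

theorem val_three (hn : 2 ≤ n) : (3 : Fin (n + 2)).val = 3 :=
  Nat.mod_eq_of_lt (by omega : 3 < n + 2)

theorem val_zero_one_three (hn : 2 ≤ n) :
    ({0, 1, 3} : Finset (Fin (n + 2))).val = (([0, 1, 3] : List (Fin (n + 2))) : Multiset _) := by
  rw [Finset.insert_val_of_notMem, Finset.insert_val_of_notMem]
  · rfl
  all_goals
    simp only [Finset.mem_insert, Finset.mem_singleton, Fin.ext_iff, Fin.val_zero, Fin.val_one,
      val_three hn]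
    omega

theorem mResolving_cycleGraph_zero_one_three (hn : 4 ≤ n) :
    mResolving (cycleGraph (n + 2)) {0, 1, 3} := by
  intro u v huv h
  simp only [val_zero_one_three (by omega : 2 ≤ n), Multiset.map_coe, List.map_cons,
    List.map_nil, Multiset.coe_eq_coe, cycleGraph_dist, Fin.val_zero, Fin.val_one,
    val_three (by omega : 2 ≤ n)] at h
  exact huv (Fin.ext (eq_of_perm_cycleDist (by omega) u.isLt v.isLt h))

end Cycle

theorem mdim_cycle (n : ℕ) (hn : 6 ≤ n) :
    Mdim (SimpleGraph.cycleGraph n) = 3 := by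
  obtain ⟨m, rfl⟩ : ∃ m, n = m + 2 := ⟨n - 2, by omega⟩
  apply le_antisymm
  · have hcard : ({0, 1, 3} : Finset (Fin (m + 2))).card = 3 := by
      rw [Finset.card, val_zero_one_three (by omega)]
      rfl
    simpa [hcard] using Mdim_le_card _ (mResolving_cycleGraph_zero_one_three (n := m) (by omega))
  · obtain ⟨k, rfl⟩ : ∃ k, m = k + 1 := ⟨m - 1, by omega⟩
    exact le_Mdim _ fun B hB => by
      exact_mod_cast three_le_card_of_mResolving _ cycleGraph_neighborSet_nontrivial hB
end

section
/- The complete bipartite graph K_{m,n} with m = 1 and n ≥ 3, or with m ≥ 2 and n ≥ 2, has no m-resolving set; equivalently Mdim(K_{m,n}) = ∞ in these cases. -/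
open Sum SimpleGraph

section aux

variable {m n : ℕ}

private lemma cb_adj (a : Fin m) (b : Fin n) :
    (completeBipartiteGraph (Fin m) (Fin n)).Adj (inl a) (inr b) := by
  simp

private lemma cb_dist_lr (a : Fin m) (b : Fin n) :
    (completeBipartiteGraph (Fin m) (Fin n)).dist (inl a) (inr b) = 1 :=
  SimpleGraph.dist_eq_one_iff_adj.mpr (cb_adj a b)

private lemma cb_dist_rl (b : Fin n) (a : Fin m) :
    (completeBipartiteGraph (Fin m) (Fin n)).dist (inr b) (inl a) = 1 := by
  rw [SimpleGraph.dist_comm]; exact cb_dist_lr a b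

private lemma cb_dist_ll (hn : 0 < n) {a a' : Fin m} (h : a ≠ a') :
    (completeBipartiteGraph (Fin m) (Fin n)).dist (inl a) (inl a') = 2 := by
  set G := completeBipartiteGraph (Fin m) (Fin n) with hG
  let b : Fin n := ⟨0, hn⟩
  let w : G.Walk (inl a) (inl a') :=
    Walk.cons (cb_adj a b) (Walk.cons ((cb_adj a' b).symm) Walk.nil)
  have hle : G.dist (inl a) (inl a') ≤ 2 := by
    have := SimpleGraph.dist_le w
    simpa [w] using this
  have h0 : G.dist (inl a) (inl a') ≠ 0 := by
    rw [SimpleGraph.dist_ne_zero_iff_ne_and_reachable]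
    exact ⟨by simp [h], ⟨w⟩⟩
  have h1 : G.dist (inl a) (inl a') ≠ 1 := by
    simp only [ne_eq, SimpleGraph.dist_eq_one_iff_adj]
    simp [hG]
  omega

private lemma cb_dist_rr (hm : 0 < m) {b b' : Fin n} (h : b ≠ b') :
    (completeBipartiteGraph (Fin m) (Fin n)).dist (inr b) (inr b') = 2 := by
  set G := completeBipartiteGraph (Fin m) (Fin n) with hG
  let a : Fin m := ⟨0, hm⟩
  let w : G.Walk (inr b) (inr b') :=
    Walk.cons ((cb_adj a b).symm) (Walk.cons (cb_adj a b') Walk.nil)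
  have hle : G.dist (inr b) (inr b') ≤ 2 := by
    have := SimpleGraph.dist_le w
    simpa [w] using this
  have h0 : G.dist (inr b) (inr b') ≠ 0 := by
    rw [SimpleGraph.dist_ne_zero_iff_ne_and_reachable]
    exact ⟨by simp [h], ⟨w⟩⟩
  have h1 : G.dist (inr b) (inr b') ≠ 1 := by
    simp only [ne_eq, SimpleGraph.dist_eq_one_iff_adj]
    simp [hG]
  omega

/-- Twins (same membership status, same distances to everything else) have equal
distance multisets. -/
private lemma twin_maps_eq {V : Type*} (G : SimpleGraph V) (B : Finset V) {u v : V}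
    (huv : u ≠ v) (hmem : u ∈ B ↔ v ∈ B)
    (hd : ∀ b, b ≠ u → b ≠ v → G.dist u b = G.dist v b) :
    Multiset.map (fun b => G.dist u b) B.val = Multiset.map (fun b => G.dist v b) B.val := by
  by_cases hu : u ∈ B
  · have hv : v ∈ B := hmem.mp hu
    obtain ⟨s, hs⟩ := Multiset.exists_cons_of_mem (Finset.mem_val.mpr hu)
    have hvs : v ∈ s := by
      have hv' : v ∈ u ::ₘ s := hs ▸ Finset.mem_val.mpr hv
      rcases Multiset.mem_cons.mp hv' with h | h
      · exact absurd h.symm huv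
      · exact h
    obtain ⟨t, ht⟩ := Multiset.exists_cons_of_mem hvs
    have hB : B.val = u ::ₘ v ::ₘ t := by rw [hs, ht]
    have hnd : Multiset.Nodup (u ::ₘ v ::ₘ t) := hB ▸ B.nodup
    have hut : u ∉ t := fun h =>
      (Multiset.nodup_cons.mp hnd).1 (Multiset.mem_cons_of_mem h)
    have hvt : v ∉ t := (Multiset.nodup_cons.mp (Multiset.nodup_cons.mp hnd).2).1
    have htail : Multiset.map (fun b => G.dist u b) t = Multiset.map (fun b => G.dist v b) t :=
      Multiset.map_congr rfl fun b hb =>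
        hd b (fun h => hut (h ▸ hb)) (fun h => hvt (h ▸ hb))
    rw [hB]
    simp only [Multiset.map_cons]
    rw [htail, G.dist_self, G.dist_self, SimpleGraph.dist_comm (G:=G) (u:=u) (v:=v), Multiset.cons_swap]
  · have hv : v ∉ B := fun h => hu (hmem.mpr h)
    exact Multiset.map_congr rfl fun b hb =>
      hd b (fun h => hu (h ▸ Finset.mem_val.mp hb)) (fun h => hv (h ▸ Finset.mem_val.mp hb))

end aux

theorem mdim_completeBipartite (m n : ℕ)
    (h : (m = 1 ∧ 3 ≤ n) ∨ (2 ≤ m ∧ 2 ≤ n)) :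
    Mdim (completeBipartiteGraph (Fin m) (Fin n)) = ⊤ := by
  have hm : 0 < m := by rcases h with ⟨h1, _⟩ | ⟨h1, _⟩ <;> omega
  have hn : 0 < n := by rcases h with ⟨_, h1⟩ | ⟨_, h1⟩ <;> omega
  set G := completeBipartiteGraph (Fin m) (Fin n) with hG
  have hempty : {k : ℕ∞ | ∃ B : Finset (Fin m ⊕ Fin n), mResolving G B ∧ (B.card : ℕ∞) = k} = ∅ := by
    rw [Set.eq_empty_iff_forall_notMem]
    rintro k ⟨B, hres, -⟩
    -- key facts from resolving
    have keyR : ∀ b b' : Fin n, ((inr b ∈ B) ↔ (inr b' ∈ B)) → b = b' := by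
      intro b b' hbb
      by_contra hne
      refine hres (inr b) (inr b') (by simp [hne]) ?_
      refine twin_maps_eq G B (by simp [hne]) hbb ?_
      rintro (a | c) hc1 hc2
      · rw [cb_dist_rl, cb_dist_rl]
      · have hcb : c ≠ b := fun h => hc1 (by rw [h])
        have hcb' : c ≠ b' := fun h => hc2 (by rw [h])
        rw [cb_dist_rr hm (Ne.symm hcb), cb_dist_rr hm (Ne.symm hcb')]
    have keyL : ∀ a a' : Fin m, ((inl a ∈ B) ↔ (inl a' ∈ B)) → a = a' := by
      intro a a' haa
      by_contra hne
      refine hres (inl a) (inl a') (by simp [hne]) ?_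
      refine twin_maps_eq G B (by simp [hne]) haa ?_
      rintro (c | b) hc1 hc2
      · have hca : c ≠ a := fun h => hc1 (by rw [h])
        have hca' : c ≠ a' := fun h => hc2 (by rw [h])
        rw [cb_dist_ll hn (Ne.symm hca), cb_dist_ll hn (Ne.symm hca')]
      · rw [cb_dist_lr, cb_dist_lr]
    rcases h with ⟨hm1, hn3⟩ | ⟨hm2, hn2⟩
    · -- m = 1, n ≥ 3 : among three right vertices two share status
      have d01 : (⟨0, by omega⟩ : Fin n) ≠ ⟨1, by omega⟩ := by simp [Fin.ext_iff]
      have d02 : (⟨0, by omega⟩ : Fin n) ≠ ⟨2, by omega⟩ := by simp [Fin.ext_iff]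
      have d12 : (⟨1, by omega⟩ : Fin n) ≠ ⟨2, by omega⟩ := by simp [Fin.ext_iff]
      by_cases h0 : inr (⟨0, by omega⟩ : Fin n) ∈ B <;>
      by_cases h1 : inr (⟨1, by omega⟩ : Fin n) ∈ B <;>
      by_cases h2 : inr (⟨2, by omega⟩ : Fin n) ∈ B
      · exact d01 (keyR _ _ (iff_of_true h0 h1))
      · exact d01 (keyR _ _ (iff_of_true h0 h1))
      · exact d02 (keyR _ _ (iff_of_true h0 h2))
      · exact d12 (keyR _ _ (iff_of_false h1 h2))
      · exact d12 (keyR _ _ (iff_of_true h1 h2))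
      · exact d02 (keyR _ _ (iff_of_false h0 h2))
      · exact d01 (keyR _ _ (iff_of_false h0 h1))
      · exact d01 (keyR _ _ (iff_of_false h0 h1))
    · -- m ≥ 2, n ≥ 2
      have da : (⟨0, by omega⟩ : Fin m) ≠ ⟨1, by omega⟩ := by simp [Fin.ext_iff]
      have db : (⟨0, by omega⟩ : Fin n) ≠ ⟨1, by omega⟩ := by simp [Fin.ext_iff]
      obtain ⟨a, aout, ha, haout⟩ :
          ∃ a aout : Fin m, inl a ∈ B ∧ inl aout ∉ B := by
        by_cases h0 : inl (⟨0, by omega⟩ : Fin m) ∈ B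
        · by_cases h1 : inl (⟨1, by omega⟩ : Fin m) ∈ B
          · exact absurd (keyL _ _ (iff_of_true h0 h1)) da
          · exact ⟨_, _, h0, h1⟩
        · by_cases h1 : inl (⟨1, by omega⟩ : Fin m) ∈ B
          · exact ⟨_, _, h1, h0⟩
          · exact absurd (keyL _ _ (iff_of_false h0 h1)) da
      obtain ⟨b, bout, hb, hbout⟩ :
          ∃ b bout : Fin n, inr b ∈ B ∧ inr bout ∉ B := by
        by_cases h0 : inr (⟨0, by omega⟩ : Fin n) ∈ B
        · by_cases h1 : inr (⟨1, by omega⟩ : Fin n) ∈ B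
          · exact absurd (keyR _ _ (iff_of_true h0 h1)) db
          · exact ⟨_, _, h0, h1⟩
        · by_cases h1 : inr (⟨1, by omega⟩ : Fin n) ∈ B
          · exact ⟨_, _, h1, h0⟩
          · exact absurd (keyR _ _ (iff_of_false h0 h1)) db
      have hBeq : B = {inl a, inr b} := by
        apply Finset.Subset.antisymm
        · rintro (a' | b') hc
          · have : a' = a := keyL a' a (iff_of_true hc ha)
            simp [this]
          · have : b' = b := keyR b' b (iff_of_true hc hb)
            simp [this]
        · intro c hc
          rcases Finset.mem_insert.mp hc with h | h
          · exact h ▸ ha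
          · exact (Finset.mem_singleton.mp h) ▸ hb
      have haa : aout ≠ a := fun h => haout (h ▸ ha)
      have hbb : bout ≠ b := fun h => hbout (h ▸ hb)
      refine hres (inl aout) (inr bout) (by simp) ?_
      have hval : ({inl a, inr b} : Finset (Fin m ⊕ Fin n)).val =
          (inl a : Fin m ⊕ Fin n) ::ₘ {inr b} := by
        rw [Finset.insert_val_of_notMem (by simp)]
        rfl
      rw [hBeq, hval]
      simp only [Multiset.map_cons, Multiset.map_singleton]
      rw [cb_dist_ll hn haa, cb_dist_lr, cb_dist_rl, cb_dist_rr hm hbb]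
      decide
  rw [Mdim, hempty, sInf_empty]
end

section
/- Let R be a finite commutative ring that is not a field (equivalently, has a nonzero zero-divisor). If the ordinary zero-divisor graph Γ(R) is complete (every two distinct nonzero zero-divisors multiply to zero) and R is not isomorphic to Z/2 × Z/2, then all nonzero zero-divisors of R have the same annihilator, so the compressed zero-divisor graph Γ_E(R) has exactly one vertex. -/
/-- The annihilator of an element, as a set. -/
def ann {R : Type*} [CommRing R] (x : R) : Set R := {r | r * x = 0}

/-- `x` is a nonzero zero-divisor. -/
def IsNzZD {R : Type*} [CommRing R] (x : R) : Prop :=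
  x ≠ 0 ∧ ∃ y : R, y ≠ 0 ∧ x * y = 0

theorem complete_zdg_one_class (R : Type*) [CommRing R] [Fintype R]
    (hZD : ∃ x : R, IsNzZD x)
    (hcomplete : ∀ x y : R, IsNzZD x → IsNzZD y → x ≠ y → x * y = 0)
    (hnotZ2Z2 : ¬ Nonempty (R ≃+* (ZMod 2 × ZMod 2))) :
    ∀ x y : R, IsNzZD x → IsNzZD y → ann x = ann y := by
  classical
  have hsq : ∀ x : R, IsNzZD x → x * x = 0 := by
    intro a ha
    by_contra haa
    obtain ⟨ha0, b, hb0, hab⟩ := ha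
    have ha' : IsNzZD a := ⟨ha0, b, hb0, hab⟩
    exfalso; apply hnotZ2Z2
    -- Step 1: a is idempotent
    have hidem : a * a = a := by
      by_contra hne
      have ha2 : IsNzZD (a * a) := ⟨haa, b, hb0, by rw [mul_assoc, hab, mul_zero]⟩
      have h3 : a * (a * a) = 0 := hcomplete a (a * a) ha' ha2 (fun h => hne h.symm)
      rcases eq_or_ne (a + a * a) 0 with hc | hc
      · exact haa (by linear_combination a * hc - h3)
      · have hcz : IsNzZD (a + a * a) :=
          ⟨hc, b, hb0, by linear_combination hab + a * hab⟩
        rcases eq_or_ne (a + a * a) a with hca | hca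
        · exact haa (by linear_combination hca)
        · have h5 : a * (a + a * a) = 0 :=
            hcomplete a (a + a * a) ha' hcz (fun h => hca h.symm)
          exact haa (by linear_combination h5 - h3)
    have hne1 : a ≠ 1 := by
      rintro rfl; rw [one_mul] at hab; exact hb0 hab
    have hu0 : (1 - a : R) ≠ 0 := sub_ne_zero.mpr (Ne.symm hne1)
    have hu : a * (1 - a) = 0 := by linear_combination -hidem
    have hu' : IsNzZD (1 - a) := ⟨hu0, a, ha0, by linear_combination -hidem⟩
    -- char 2 facts
    have h2a : a + a = 0 := by
      rcases eq_or_ne (-a) a with hneg | hneg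
      · linear_combination -hneg
      · have hnz : IsNzZD (-a) := ⟨neg_ne_zero.mpr ha0, 1 - a, hu0, by linear_combination -hu⟩
        have h := hcomplete a (-a) ha' hnz (fun h => hneg h.symm)
        exact absurd (by linear_combination -hidem - h : a = 0) ha0
    have hu2 : (1 - a) + (1 - a) = 0 := by
      rcases eq_or_ne (-(1 - a)) (1 - a) with hneg | hneg
      · linear_combination -hneg
      · have hnz : IsNzZD (-(1 - a)) :=
          ⟨neg_ne_zero.mpr hu0, a, ha0, by linear_combination hidem⟩
        have h := hcomplete (1 - a) (-(1 - a)) hu' hnz (fun h => hneg h.symm)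
        exact absurd (by linear_combination -h - hidem : (1 - a : R) = 0) hu0
    have husq : (1 - a) * (1 - a) = 1 - a := by linear_combination hidem
    -- every multiple of a is 0 or a; similarly for 1-a
    have hra : ∀ r : R, r * a = 0 ∨ r * a = a := by
      intro r
      by_contra h
      push_neg at h
      obtain ⟨h0, h1⟩ := h
      have hnz : IsNzZD (r * a) := ⟨h0, 1 - a, hu0, by linear_combination r * hu⟩
      have h := hcomplete a (r * a) ha' hnz (fun h => h1 h.symm)
      exact h0 (by linear_combination h - r * hidem)
    have hru : ∀ r : R, r * (1 - a) = 0 ∨ r * (1 - a) = 1 - a := by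
      intro r
      by_contra h
      push_neg at h
      obtain ⟨h0, h1⟩ := h
      have hnz : IsNzZD (r * (1 - a)) := ⟨h0, a, ha0, by linear_combination r * hu⟩
      have h := hcomplete (1 - a) (r * (1 - a)) hu' hnz (fun h => h1 h.symm)
      exact h0 (by linear_combination h - r * husq)
    -- helper lemmas for homomorphism properties
    have keymul : ∀ v : R, v ≠ 0 → (∀ r, r * v = 0 ∨ r * v = v) → ∀ x y : R,
        (if x * y * v = 0 then (0 : ZMod 2) else 1) =
        (if x * v = 0 then (0 : ZMod 2) else 1) * (if y * v = 0 then (0 : ZMod 2) else 1) := by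
      intro v hv hcase x y
      rcases hcase y with hy | hy
      · have h : x * y * v = 0 := by rw [mul_assoc, hy, mul_zero]
        simp [h, hy]
      · have hxy : x * y * v = x * v := by rw [mul_assoc, hy]
        rcases hcase x with hx | hx
        · simp [hxy, hx]
        · rw [hxy, hx, hy]
          simp [hv]
    have keyadd : ∀ v : R, v ≠ 0 → v + v = 0 → (∀ r, r * v = 0 ∨ r * v = v) → ∀ x y : R,
        (if (x + y) * v = 0 then (0 : ZMod 2) else 1) =
        (if x * v = 0 then (0 : ZMod 2) else 1) + (if y * v = 0 then (0 : ZMod 2) else 1) := by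
      intro v hv hvv hcase x y
      have hd : (x + y) * v = x * v + y * v := add_mul x y v
      rcases hcase x with hx | hx <;> rcases hcase y with hy | hy <;>
        rw [hd, hx, hy] <;> simp [hv, hvv] <;> decide
    let f : R →+* ZMod 2 × ZMod 2 :=
      { toFun := fun r => (if r * a = 0 then 0 else 1, if r * (1 - a) = 0 then 0 else 1)
        map_one' := by simp only [one_mul, if_neg ha0, if_neg hu0]; rfl
        map_mul' := fun x y => by
          exact Prod.ext (keymul a ha0 hra x y) (keymul (1 - a) hu0 hru x y)
        map_zero' := by simp
        map_add' := fun x y => by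
          exact Prod.ext (keyadd a ha0 h2a hra x y) (keyadd (1 - a) hu0 hu2 hru x y) }
    have hf : ∀ r : R, f r = (if r * a = 0 then 0 else 1, if r * (1 - a) = 0 then 0 else 1) :=
      fun r => rfl
    have hinj : Function.Injective f := by
      rw [injective_iff_map_eq_zero]
      intro r hr
      rw [hf, Prod.ext_iff] at hr
      obtain ⟨hr1, hr2⟩ := hr
      have h1 : r * a = 0 := by
        by_contra h; rw [if_neg h] at hr1; exact one_ne_zero hr1
      have h2 : r * (1 - a) = 0 := by
        by_contra h; rw [if_neg h] at hr2; exact one_ne_zero hr2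
      linear_combination h1 + h2
    have hsurj : Function.Surjective f := by
      intro z
      have hz : z = (0, 0) ∨ z = (1, 0) ∨ z = (0, 1) ∨ z = (1, 1) := by revert z; decide
      rcases hz with rfl | rfl | rfl | rfl
      · exact ⟨0, by rw [hf]; simp⟩
      · exact ⟨a, by rw [hf, hidem, hu, if_neg ha0, if_pos rfl]⟩
      · exact ⟨1 - a, by
          rw [hf]
          have h1 : (1 - a) * a = 0 := by linear_combination hu
          rw [h1, husq, if_pos rfl, if_neg hu0]⟩
      · exact ⟨1, by rw [hf]; simp [ha0, hu0]⟩
    exact ⟨RingEquiv.ofBijective f ⟨hinj, hsurj⟩⟩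
  -- main conclusion
  have main : ∀ x y r : R, IsNzZD x → IsNzZD y → r * x = 0 → r * y = 0 := by
    intro x y r hx hy hrx
    rcases eq_or_ne r 0 with rfl | hr0
    · simp
    have hrz : IsNzZD r := ⟨hr0, x, hx.1, hrx⟩
    rcases eq_or_ne r y with rfl | hry
    · exact hsq r hrz
    · exact hcomplete r y hrz hy hry
  intro x y hx hy
  ext r
  exact ⟨fun h => main x y r hx hy h, fun h => main y x r hy hx h⟩
end

section
/- If R is a Boolean ring (a² = a for all a), then the map x ↦ [x] induces a graph isomorphism from the zero-divisor graph Γ(R) to the compressed zero-divisor graph Γ_E(R); equivalently, in a Boolean ring distinct nonzero zero-divisors have distinct annihilators. -/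
theorem boolean_ann_injective (R : Type*) [CommRing R]
    (hbool : ∀ a : R, a * a = a) :
    ∀ x y : R, IsNzZD x → IsNzZD y → ann x = ann y → x = y := by
  intro x y _ _ h
  have hx : (1 - x) ∈ ann x := by
    simp only [ann, Set.mem_setOf_eq, sub_mul, one_mul, hbool, sub_self]
  have hy : (1 - y) ∈ ann y := by
    simp only [ann, Set.mem_setOf_eq, sub_mul, one_mul, hbool, sub_self]
  rw [h] at hx
  rw [← h] at hy
  simp only [ann, Set.mem_setOf_eq, sub_mul, one_mul, sub_eq_zero] at hx hy
  rw [hy, mul_comm, ← hx]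
end
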